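/- arXiv:1505.03738 — 5 statements merged into one kernel-verified Lean document; each statement's English description precedes it below -/
import Mathlib

section
/- For every complex x, every finite multiset F of resting sets such that Fate(x, F) holds, and every finite multiset B of complexes with B ~ F, there exists a fast transition from the singleton multiset {x} to B. -/
/-- A reaction: a pair (reactants, products) of finite multisets of complexes. -/
abbrev Rxn (C : Type*) := Multiset C × Multiset C

variable {C : Type*}

/-- Edge of the fast-reaction digraph Γ: a fast (1,1) reaction ({x}, {y}) in R. -/
def FastEdge (R : Set (Rxn C)) (x y : C) : Prop :=
  ((({x} : Multiset C), ({y} : Multiset C)) : Rxn C) ∈ R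

/-- Reachability along Γ. -/
def Reach (R : Set (Rxn C)) : C → C → Prop :=
  Relation.ReflTransGen (FastEdge R)

/-- The strongly connected component of Γ containing x. -/
def scc (R : Set (Rxn C)) (x : C) : Set C :=
  {y | Reach R x y ∧ Reach R y x}

/-- Q is a resting set: an SCC of Γ all of whose outgoing fast reactions stay in Q. -/
def IsRestingSet (R : Set (Rxn C)) (Q : Set C) : Prop :=
  (∃ x, Q = scc R x) ∧
    ∀ r ∈ R, r.1.card = 1 → (∀ a ∈ r.1, a ∈ Q) → ∀ b ∈ r.2, b ∈ Q

/-- x is a resting complex: a member of some resting set. -/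
def RestingComplex (R : Set (Rxn C)) (x : C) : Prop :=
  ∃ Q, IsRestingSet R Q ∧ x ∈ Q

/-- One step of a fast transition: replace one occurrence of x by the products of a
fast reaction ({x}, P) ∈ R. -/
def FastStep (R : Set (Rxn C)) (M N : Multiset C) : Prop :=
  ∃ (x : C) (P M' : Multiset C),
    ((({x} : Multiset C), P) : Rxn C) ∈ R ∧ M = x ::ₘ M' ∧ N = P + M'

/-- A fast transition: finitely many fast steps. -/
def FastTransition (R : Set (Rxn C)) : Multiset C → Multiset C → Prop :=
  Relation.ReflTransGen (FastStep R)

/-- The fate predicate Fate(x, F), for x a complex and F a finite multiset of resting sets. -/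
inductive Fate (R : Set (Rxn C)) : C → Multiset (Set C) → Prop
  | resting (x : C) (h : IsRestingSet R (scc R x)) :
      Fate R x {scc R x}
  | step (x a : C) (l : List (C × Multiset (Set C)))
      (hnr : ¬ IsRestingSet R (scc R x))
      (ha : a ∈ scc R x)
      (hr : ((({a} : Multiset C), (↑(l.map Prod.fst) : Multiset C)) : Rxn C) ∈ R)
      (hout : ∃ b ∈ l.map Prod.fst, b ∉ scc R x)
      (hf : ∀ p ∈ l, Fate R p.1 p.2) :
      Fate R x (l.map Prod.snd).sum

/-- B ~ F : the multiset B of complexes represents the multiset F of resting sets,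
i.e. there is a bijective matching pairing each b ∈ B with a Q ∈ F with b ∈ Q. -/
def Represents (B : Multiset C) (F : Multiset (Set C)) : Prop :=
  Multiset.Rel (fun b Q => b ∈ Q) B F

/-- F is a fate of the multiset P of complexes: F = F_1 + ... + F_n where
P = {b_1, ..., b_n} and Fate(b_i, F_i) for each i. -/
def FateM (R : Set (Rxn C)) (P : Multiset C) (F : Multiset (Set C)) : Prop :=
  ∃ l : List (C × Multiset (Set C)),
    P = (↑(l.map Prod.fst) : Multiset C) ∧
    F = (l.map Prod.snd).sum ∧
    ∀ p ∈ l, Fate R p.1 p.2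

/-- The condensed reactions: for each slow reaction ({a₁, a₂}, P) ∈ R and each fate F
of P, the condensed reaction ({SCC(a₁), SCC(a₂)}, F). -/
def IsCondensed (R : Set (Rxn C)) (Ahat Bhat : Multiset (Set C)) : Prop :=
  ∃ (a1 a2 : C) (P : Multiset C),
    ((({a1, a2} : Multiset C), P) : Rxn C) ∈ R ∧
    Ahat = ({scc R a1, scc R a2} : Multiset (Set C)) ∧
    FateM R P Bhat

/-- Every reaction in R is fast (unimolecular) or slow (bimolecular). -/
def FastOrSlow (R : Set (Rxn C)) : Prop :=
  ∀ r ∈ R, r.1.card = 1 ∨ r.1.card = 2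

/-- Reactants and products of every reaction are nonempty. -/
def NonemptyRxns (R : Set (Rxn C)) : Prop :=
  ∀ r ∈ R, r.1 ≠ 0 ∧ r.2 ≠ 0

/-- Property 3: every finite cyclic sequence of fast reactions, in which each reaction
consumes a product of the previous one (cyclically), consists of (1,1) reactions only. -/
def Prop3 (R : Set (Rxn C)) : Prop :=
  ∀ (n : ℕ) (hn : 0 < n) (r : Fin n → Rxn C),
    (∀ i, r i ∈ R ∧ (r i).1.card = 1) →
    (∀ i : Fin n, ∀ a ∈ (r ⟨(i.1 + 1) % n, Nat.mod_lt _ hn⟩).1, a ∈ (r i).2) →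
    ∀ i, (r i).2.card = 1

/-- Property 4: both reactants of every slow reaction are resting complexes. -/
def Prop4 (R : Set (Rxn C)) : Prop :=
  ∀ r ∈ R, r.1.card = 2 → ∀ a ∈ r.1, RestingComplex R a

/-- A resting-state transition from {a₁, a₂} to B: a slow reaction ({a₁, a₂}, P) ∈ R
followed by a fast transition from P to B. -/
def RestingTransition (R : Set (Rxn C)) (a1 a2 : C) (B : Multiset C) : Prop :=
  ∃ P : Multiset C, ((({a1, a2} : Multiset C), P) : Rxn C) ∈ R ∧ FastTransition R P B

/-- One step of a sequence of detailed reactions: remove the reactants of some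
reaction in R from the current multiset and add its products. -/
def DetailedStep (R : Set (Rxn C)) (M N : Multiset C) : Prop :=
  ∃ r ∈ R, ∃ M' : Multiset C, M = r.1 + M' ∧ N = r.2 + M'

/-- One step of a sequence of condensed reactions: remove the reactant multiset of a
condensed reaction from the current multiset of resting sets and add its products. -/
def CondensedStep (R : Set (Rxn C)) (M N : Multiset (Set C)) : Prop :=
  ∃ Ahat Bhat M' : Multiset (Set C),
    IsCondensed R Ahat Bhat ∧ M = Ahat + M' ∧ N = Bhat + M'

/-!
Induction on `Fate`. A resting fate `{SCC(x)}` is represented by a single `b ∈ SCC(x)`, which `x`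
reaches along edges of Γ. Otherwise `x` reaches the reactant `a` of the fast reaction
`({a}, {b₁, …, bₙ})` inside its SCC and fires it; by induction each `{bᵢ}` reaches the part of `B`
matched with `Fᵢ`, and fast transitions of disjoint submultisets run in parallel.
-/

section

variable {R : Set (Rxn C)}

lemma FastStep.add_right {M N : Multiset C} (h : FastStep R M N) (K : Multiset C) :
    FastStep R (M + K) (N + K) := by
  obtain ⟨x, P, M', hr, rfl, rfl⟩ := h
  exact ⟨x, P, M' + K, hr, Multiset.cons_add x M' K, add_assoc P M' K⟩

lemma FastStep.of_mem {a : C} {P : Multiset C} (hr : (({a}, P) : Rxn C) ∈ R) :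
    FastStep R {a} P :=
  ⟨a, P, 0, hr, rfl, (add_zero P).symm⟩

lemma FastTransition.add_right {M N : Multiset C} (h : FastTransition R M N) (K : Multiset C) :
    FastTransition R (M + K) (N + K) :=
  Relation.ReflTransGen.lift (· + K) (fun _ _ hs => hs.add_right K) _ _ h

lemma FastTransition.add {M₁ N₁ M₂ N₂ : Multiset C} (h₁ : FastTransition R M₁ N₁)
    (h₂ : FastTransition R M₂ N₂) : FastTransition R (M₁ + M₂) (N₁ + N₂) := by
  have h₂' : FastTransition R (N₁ + M₂) (N₁ + N₂) := by
    simpa only [add_comm N₁] using h₂.add_right N₁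
  exact (h₁.add_right M₂).trans h₂'

lemma Reach.fastTransition {x y : C} (h : Reach R x y) : FastTransition R {x} {y} :=
  Relation.ReflTransGen.lift (fun c => ({c} : Multiset C))
    (fun _ _ he => FastStep.of_mem he) _ _ h

lemma represents_singleton_iff {B : Multiset C} {Q : Set C} :
    Represents B {Q} ↔ ∃ b ∈ Q, B = {b} := by
  rw [Represents, ← Multiset.cons_zero, Multiset.rel_cons_right]
  simp only [Multiset.rel_zero_right]
  constructor
  · rintro ⟨b, _, hb, rfl, rfl⟩
    exact ⟨b, hb, rfl⟩
  · rintro ⟨b, hb, rfl⟩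
    exact ⟨b, 0, hb, rfl, rfl⟩

lemma FastTransition.of_represents_sum (l : List (C × Multiset (Set C)))
    (hl : ∀ p ∈ l, ∀ B, Represents B p.2 → FastTransition R {p.1} B)
    (B : Multiset C) (hB : Represents B (l.map Prod.snd).sum) :
    FastTransition R ↑(l.map Prod.fst) B := by
  induction l generalizing B with
  | nil =>
    rw [List.map_nil, List.sum_nil, Represents, Multiset.rel_zero_right] at hB
    exact hB ▸ Relation.ReflTransGen.refl
  | cons p t ih =>
    rw [List.map_cons, List.sum_cons, Represents, Multiset.rel_add_right] at hB
    obtain ⟨B₁, B₂, hB₁, hB₂, rfl⟩ := hB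
    rw [List.map_cons, ← Multiset.cons_coe, ← Multiset.singleton_add]
    exact (hl p List.mem_cons_self B₁ hB₁).add
      (ih (fun q hq => hl q (List.mem_cons_of_mem p hq)) B₂ hB₂)

end

theorem fate_to_fast_transition_general {C : Type*} (R : Set (Rxn C))
    (x : C) (F : Multiset (Set C)) (hF : Fate R x F)
    (B : Multiset C) (hB : Represents B F) :
    FastTransition R ({x} : Multiset C) B := by
  induction hF generalizing B with
  | resting y _ =>
    obtain ⟨b, hb, rfl⟩ := represents_singleton_iff.mp hB
    exact hb.1.fastTransition
  | step y a l _ ha hr _ _ ih =>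
    have hya : FastTransition R {y} {a} := ha.1.fastTransition
    exact (hya.tail (FastStep.of_mem hr)).trans (FastTransition.of_represents_sum l ih B hB)

/-- Lemma 1 (Fates map to fast transitions): for every complex x, every fate F of x,
and every multiset B of complexes with B ~ F, there is a fast transition {x} → B. -/
theorem fate_to_fast_transition {C : Type*} [Fintype C] (R : Set (Rxn C))
    (hRfin : R.Finite) (hne : NonemptyRxns R) (hfs : FastOrSlow R)
    (x : C) (F : Multiset (Set C)) (hF : Fate R x F)
    (B : Multiset C) (hB : Represents B F) :
    FastTransition R ({x} : Multiset C) B :=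
  fate_to_fast_transition_general R x F hF B hB
end

section
/- Assume Property 3. For every complex x and every fast transition from the singleton multiset {x} to a finite multiset B all of whose elements are resting complexes, there exists a finite multiset F of resting sets such that Fate(x, F) holds and B ~ F. -/
variable {C : Type*}

/-!
A fate of `x` is assembled backwards along the fast transition. Every multiset `M` on the way
carries fates `F_m` of its elements whose sum is represented by `B`: at the end each resting
complex `b` has the fate `{SCC(b)}`, and a fast step `y ↦ P` combines the fates of the products
`P` into a fate of `y`. That last combination is a `Fate.step` when some product leaves `SCC(y)`
(then `SCC(y)` is not resting); otherwise every product reaches back to `y`, so Property 3 forces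
the reaction to be `(1,1)` and the fate of its single product is already a fate of `y`.
-/

theorem mem_scc_self (R : Set (Rxn C)) (x : C) : x ∈ scc R x :=
  ⟨.refl, .refl⟩

theorem scc_eq_of_mem {R : Set (Rxn C)} {x b : C} (h : b ∈ scc R x) : scc R b = scc R x := by
  ext y
  exact ⟨fun hy => ⟨h.1.trans hy.1, hy.2.trans h.2⟩, fun hy => ⟨h.2.trans hy.1, hy.2.trans h.1⟩⟩

theorem Multiset.rel_singleton_left {α β : Type*} {r : α → β → Prop} {a : α}
    {t : Multiset β} : Multiset.Rel r {a} t ↔ ∃ b, r a b ∧ t = {b} := by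
  rw [← Multiset.cons_zero, Multiset.rel_cons_left]
  simp

theorem Multiset.Rel.exists_list {α β : Type*} {r : α → β → Prop} {s : Multiset α}
    {t : Multiset β} (h : Multiset.Rel r s t) :
    ∃ l : List (α × β), ↑(l.map Prod.fst) = s ∧ ↑(l.map Prod.snd) = t ∧ ∀ p ∈ l, r p.1 p.2 := by
  induction h with
  | zero => exact ⟨[], rfl, rfl, by simp⟩
  | @cons a b _ _ hab _ ih =>
    obtain ⟨l, rfl, rfl, hl⟩ := ih
    exact ⟨(a, b) :: l, rfl, rfl, by simpa using ⟨hab, fun a b => hl (a, b)⟩⟩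

theorem Prop3.card_eq_one_of_isChain {R : Set (Rxn C)} (h3 : Prop3 R) {b x : C} {l : List C}
    {P : Multiset C} (hchain : (b :: l).IsChain (FastEdge R))
    (hlast : (b :: l).getLast (List.cons_ne_nil b l) = x)
    (hr : ((({x} : Multiset C), P) : Rxn C) ∈ R) (hb : b ∈ P) : P.card = 1 := by
  set L := b :: l
  have hn : 0 < L.length := List.length_pos_of_ne_nil (List.cons_ne_nil b l)
  -- the path `L` from `b` to `x` in Γ, closed up by the reaction `({x}, P)` with `b ∈ P`
  let r : Fin L.length → Rxn C := fun i =>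
    ({L[i.1]}, if h : i.1 + 1 < L.length then {L[i.1 + 1]} else P)
  have hlastR : r ⟨L.length - 1, by omega⟩ = ({x}, P) := by
    simp only [r, dif_neg (show ¬(L.length - 1 + 1 < L.length) by omega)]
    rw [← hlast, List.getLast_eq_getElem]
  have hfast : ∀ i, r i ∈ R ∧ (r i).1.card = 1 := by
    intro i
    refine ⟨?_, Multiset.card_singleton _⟩
    by_cases h : i.1 + 1 < L.length
    · simp only [r, dif_pos h]
      exact List.isChain_iff_getElem.mp hchain i.1 h
    · rwa [show i = ⟨L.length - 1, by omega⟩ by ext; simp only; omega, hlastR]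
  have hcycle : ∀ i : Fin L.length, ∀ a ∈ (r ⟨(i.1 + 1) % L.length, Nat.mod_lt _ hn⟩).1,
      a ∈ (r i).2 := by
    intro i a ha
    rw [Multiset.mem_singleton.mp ha]
    by_cases h : i.1 + 1 < L.length
    · simp [r, h, Nat.mod_eq_of_lt h]
    · simp [r, show i.1 + 1 = L.length by omega, L, hb]
  simpa [hlastR] using h3 L.length hn r hfast hcycle ⟨L.length - 1, by omega⟩

theorem Prop3.eq_singleton_of_reach {R : Set (Rxn C)} (h3 : Prop3 R) {x b : C} {P : Multiset C}
    (hr : ((({x} : Multiset C), P) : Rxn C) ∈ R) (hb : b ∈ P) (hbx : Reach R b x) :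
    P = {b} := by
  obtain ⟨l, hchain, hlast⟩ := List.exists_isChain_cons_of_relationReflTransGen hbx
  obtain ⟨c, rfl⟩ := Multiset.card_eq_one.mp (h3.card_eq_one_of_isChain hchain hlast hr hb)
  rw [Multiset.mem_singleton.mp hb]

theorem Fate.of_scc_eq {R : Set (Rxn C)} {x y : C} {F : Multiset (Set C)}
    (h : scc R x = scc R y) (hy : Fate R y F) : Fate R x F := by
  cases hy with
  | resting y hres =>
    rw [← h] at hres ⊢
    exact .resting x hres
  | step y a l hnr ha hr hout hf =>
    rw [← h] at hnr ha hout
    exact .step x a l hnr ha hr hout hf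

theorem Fate.of_fast_reaction {R : Set (Rxn C)} (hne : NonemptyRxns R) (h3 : Prop3 R)
    {y : C} {P : Multiset C} (hr : ((({y} : Multiset C), P) : Rxn C) ∈ R)
    {Fs : Multiset (Multiset (Set C))} (hP : Multiset.Rel (Fate R) P Fs) :
    Fate R y Fs.sum := by
  by_cases hout : ∃ b ∈ P, b ∉ scc R y
  · have hnr : ¬ IsRestingSet R (scc R y) := by
      obtain ⟨b, hb, hby⟩ := hout
      exact fun hres => hby (hres.2 _ hr (Multiset.card_singleton y)
        (fun a ha => Multiset.mem_singleton.mp ha ▸ mem_scc_self R y) b hb)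
    obtain ⟨l, rfl, rfl, hl⟩ := hP.exists_list
    rw [Multiset.sum_coe]
    exact .step y y l hnr (mem_scc_self R y) hr hout hl
  · push Not at hout
    obtain ⟨b, hb⟩ := Multiset.exists_mem_of_ne_zero (hne _ hr).2
    obtain rfl := h3.eq_singleton_of_reach hr hb (hout b hb).2
    obtain ⟨F, hbF, rfl⟩ := Multiset.rel_singleton_left.mp hP
    rw [Multiset.sum_singleton]
    exact hbF.of_scc_eq (scc_eq_of_mem (hout b hb)).symm

theorem exists_fates_of_resting {R : Set (Rxn C)} {B : Multiset C}
    (hB : ∀ b ∈ B, RestingComplex R b) :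
    ∃ Fs, Multiset.Rel (Fate R) B Fs ∧ Represents B Fs.sum := by
  refine ⟨(B.map (scc R)).map ({·}), ?_, ?_⟩
  · refine Multiset.rel_map_right.mpr <| Multiset.rel_map_right.mpr <|
      Multiset.rel_refl_of_refl_on fun b hb => ?_
    obtain ⟨Q, hQ, hbQ⟩ := hB b hb
    obtain ⟨z, rfl⟩ := hQ.1
    exact .resting b (scc_eq_of_mem hbQ ▸ hQ)
  · rw [Represents, Multiset.sum_map_singleton, Multiset.rel_map_right]
    exact Multiset.rel_refl_of_refl_on fun b _ => mem_scc_self R b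

theorem exists_fates_of_fastTransition {R : Set (Rxn C)} (hne : NonemptyRxns R) (h3 : Prop3 R)
    {M B : Multiset C} (hT : FastTransition R M B) (hB : ∀ b ∈ B, RestingComplex R b) :
    ∃ Fs, Multiset.Rel (Fate R) M Fs ∧ Represents B Fs.sum := by
  induction hT using Relation.ReflTransGen.head_induction_on with
  | refl => exact exists_fates_of_resting hB
  | head hstep _ ih =>
    obtain ⟨Fs, hFs, hrep⟩ := ih
    obtain ⟨y, P, M', hr, rfl, rfl⟩ := hstep
    obtain ⟨FsP, FsM', hP, hM', rfl⟩ := Multiset.rel_add_left.mp hFs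
    refine ⟨FsP.sum ::ₘ FsM', hM'.cons (Fate.of_fast_reaction hne h3 hr hP), ?_⟩
    rwa [Multiset.sum_cons, ← Multiset.sum_add]

theorem fast_transition_to_fate_general {C : Type*} (R : Set (Rxn C))
    (hne : NonemptyRxns R) (h3 : Prop3 R)
    (x : C) (B : Multiset C)
    (hT : FastTransition R ({x} : Multiset C) B)
    (hB : ∀ b ∈ B, RestingComplex R b) :
    ∃ F : Multiset (Set C), Fate R x F ∧ Represents B F := by
  obtain ⟨Fs, hFs, hrep⟩ := exists_fates_of_fastTransition hne h3 hT hB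
  obtain ⟨F, hxF, rfl⟩ := Multiset.rel_singleton_left.mp hFs
  exact ⟨F, hxF, by rwa [Multiset.sum_singleton] at hrep⟩

/-- Lemma 2 (Fast transitions map to fates): assuming Property 3, every fast
transition from {x} to a multiset B of resting complexes corresponds to a fate
F of x with B ~ F. -/
theorem fast_transition_to_fate {C : Type*} [Fintype C] (R : Set (Rxn C))
    (hRfin : R.Finite) (hne : NonemptyRxns R) (hfs : FastOrSlow R) (h3 : Prop3 R)
    (x : C) (B : Multiset C)
    (hT : FastTransition R ({x} : Multiset C) B)
    (hB : ∀ b ∈ B, RestingComplex R b) :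
    ∃ F : Multiset (Set C), Fate R x F ∧ Represents B F :=
  fast_transition_to_fate_general R hne h3 x B hT hB
end

section
/- Assume C is finite and Property 3 holds. Then every complex has at least one fate: for every x ∈ C there exists a finite multiset F of resting sets such that Fate(x, F) holds. -/
variable {C : Type*}

/-!
A fast reaction of `R` leaving `SCC(x)` cannot have a product from which `x` is reachable
along fast reactions: that would close a cycle of fast reactions through it, and by
Property 3 all its reactions would be (1,1), putting the product back into `SCC(x)`. So
the products of such an exit reaction lie strictly lower in the reachability preorder,
which is well founded because `C` is finite, and fates exist by well-founded recursion.
-/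

open Relation

theorem Relation.TransGen.exists_nat_path {α : Type*} {r : α → α → Prop} {x y : α}
    (h : TransGen r x y) :
    ∃ n, ∃ f : ℕ → α, f 0 = x ∧ f (n + 1) = y ∧ ∀ i ≤ n, r (f i) (f (i + 1)) := by
  induction h with
  | @single z hxz => exact ⟨0, fun i => if i = 0 then x else z, by simp, by simp, by simpa⟩
  | @tail y z _ hyz ih =>
    obtain ⟨n, f, hf0, hfn, hf⟩ := ih
    refine ⟨n + 1, Function.update f (n + 2) z, by simp [hf0], by simp, fun i hi => ?_⟩
    rcases Nat.lt_or_eq_of_le hi with hi | rfl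
    · simpa [Function.update_of_ne (show i ≠ n + 2 by omega),
        Function.update_of_ne (show i + 1 ≠ n + 2 by omega)] using hf i (by omega)
    · simpa [hfn] using hyz

theorem wellFounded_strict_reflTransGen {α : Type*} [Finite α] (r : α → α → Prop) :
    WellFounded fun y x => ReflTransGen r x y ∧ ¬ ReflTransGen r y x := by
  have : IsTrans α fun y x => ReflTransGen r x y ∧ ¬ ReflTransGen r y x :=
    ⟨fun _ _ _ ⟨hba, hab⟩ ⟨hcb, hbc⟩ => ⟨hcb.trans hba, fun hac => hab (hac.trans hcb)⟩⟩
  have : Std.Irrefl fun y x => ReflTransGen r x y ∧ ¬ ReflTransGen r y x :=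
    ⟨fun _ h => h.2 h.1⟩
  exact Finite.wellFounded_of_trans_of_irrefl _

variable {R : Set (Rxn C)}

def Feeds (R : Set (Rxn C)) (r s : Rxn C) : Prop :=
  r ∈ R ∧ r.1.card = 1 ∧ s ∈ R ∧ s.1.card = 1 ∧ ∀ a ∈ s.1, a ∈ r.2

def FastLink (R : Set (Rxn C)) (x y : C) : Prop :=
  ∃ P, ((({x} : Multiset C), P) : Rxn C) ∈ R ∧ y ∈ P

theorem Reach.reflTransGen_fastLink {x y : C} (h : Reach R x y) :
    ReflTransGen (FastLink R) x y :=
  ReflTransGen.mono (fun _ y hxy => ⟨{y}, hxy, Multiset.mem_singleton_self y⟩) _ _ h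

theorem Prop3.card_eq_one_of_transGen (h3 : Prop3 R) {r : Rxn C}
    (h : TransGen (Feeds R) r r) : r.2.card = 1 := by
  obtain ⟨n, f, hf0, hfn, hf⟩ := h.exists_nat_path
  rw [← hf0]
  refine h3 (n + 1) n.succ_pos (fun i => f i)
    (fun i => ⟨(hf i (by omega)).1, (hf i (by omega)).2.1⟩) (fun i => ?_) ⟨0, n.succ_pos⟩
  rcases Nat.lt_or_eq_of_le (Nat.lt_succ_iff.mp i.isLt) with hi | hi
  · simpa [Nat.mod_eq_of_lt (show i.1 + 1 < n + 1 by omega)] using (hf i hi.le).2.2.2.2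
  · simpa [hi, hf0, ← hfn] using (hf n le_rfl).2.2.2.2

theorem transGen_feeds_of_reflTransGen_fastLink {u a c : C} {P Q : Multiset C}
    (hQ : ((({u} : Multiset C), Q) : Rxn C) ∈ R) (hc : c ∈ Q)
    (hP : ((({a} : Multiset C), P) : Rxn C) ∈ R) (h : ReflTransGen (FastLink R) c a) :
    TransGen (Feeds R) ({u}, Q) ({a}, P) := by
  induction h using ReflTransGen.head_induction_on generalizing u Q with
  | refl => exact .single ⟨hQ, rfl, hP, rfl, by simpa using hc⟩
  | head hlink _ ih =>
    obtain ⟨Q', hQ', hc'⟩ := hlink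
    exact .head ⟨hQ, rfl, hQ', rfl, by simpa using hc⟩ (ih hQ' hc')

theorem Prop3.eq_singleton_of_reflTransGen_fastLink (h3 : Prop3 R) {a c : C}
    {P : Multiset C} (hP : ((({a} : Multiset C), P) : Rxn C) ∈ R) (hc : c ∈ P)
    (hca : ReflTransGen (FastLink R) c a) : P = {c} := by
  obtain ⟨d, rfl⟩ := Multiset.card_eq_one.mp
    (h3.card_eq_one_of_transGen (transGen_feeds_of_reflTransGen_fastLink hP hc hP hca))
  rw [Multiset.mem_singleton.mp hc]

theorem Prop3.reach_of_reflTransGen_fastLink (h3 : Prop3 R) {a c : C}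
    (hca : ReflTransGen (FastLink R) c a) (hac : ReflTransGen (FastLink R) a c) :
    Reach R c a := by
  induction hca using ReflTransGen.head_induction_on with
  | refl => exact .refl
  | @head c c' hlink hc'a ih =>
    obtain ⟨Q, hQ, hc'⟩ := hlink
    have hQc' : Q = {c'} := h3.eq_singleton_of_reflTransGen_fastLink hQ hc' (hc'a.trans hac)
    have hcc' : FastEdge R c c' := by rwa [FastEdge, ← hQc']
    exact .head hcc' (ih (hac.tail ⟨Q, hQ, hc'⟩))

theorem exists_exit_of_not_isRestingSet {x : C} (h : ¬ IsRestingSet R (scc R x)) :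
    ∃ a P, a ∈ scc R x ∧ ((({a} : Multiset C), P) : Rxn C) ∈ R ∧ ∃ b ∈ P, b ∉ scc R x := by
  simp only [IsRestingSet, exists_apply_eq_apply', true_and, not_forall, exists_prop] at h
  obtain ⟨⟨A, P⟩, hr, hcard, hA, b, hb, hbx⟩ := h
  obtain ⟨a, rfl⟩ := Multiset.card_eq_one.mp hcard
  exact ⟨a, P, hA a (Multiset.mem_singleton_self a), hr, b, hb, hbx⟩

theorem Prop3.exit_product_descends (h3 : Prop3 R) {x a b c : C}
    {P : Multiset C} (ha : a ∈ scc R x) (hP : ((({a} : Multiset C), P) : Rxn C) ∈ R)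
    (hb : b ∈ P) (hbx : b ∉ scc R x) (hc : c ∈ P) :
    ReflTransGen (FastLink R) x c ∧ ¬ ReflTransGen (FastLink R) c x := by
  have hxc : ReflTransGen (FastLink R) x c := ha.1.reflTransGen_fastLink.tail ⟨P, hP, hc⟩
  refine ⟨hxc, fun hcx => hbx ?_⟩
  have hPc : P = {c} :=
    h3.eq_singleton_of_reflTransGen_fastLink hP hc (hcx.trans ha.1.reflTransGen_fastLink)
  rw [hPc, Multiset.mem_singleton] at hb
  subst hb
  have hab : FastEdge R a b := by rwa [FastEdge, ← hPc]
  exact ⟨ha.1.tail hab, h3.reach_of_reflTransGen_fastLink hcx hxc⟩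

theorem exists_fateM {P : Multiset C} (h : ∀ c ∈ P, ∃ F, Fate R c F) :
    ∃ F, FateM R P F := by
  choose! F hF using h
  refine ⟨_, P.toList.map fun c => (c, F c), ?_, rfl, ?_⟩
  · simp [Function.comp_def]
  · simpa using fun c hc => hF c hc

theorem Fate.of_fateM {x a : C} {P : Multiset C} {F : Multiset (Set C)}
    (hnr : ¬ IsRestingSet R (scc R x)) (ha : a ∈ scc R x)
    (hP : ((({a} : Multiset C), P) : Rxn C) ∈ R) (hout : ∃ b ∈ P, b ∉ scc R x)
    (hF : FateM R P F) : Fate R x F := by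
  obtain ⟨l, rfl, rfl, hl⟩ := hF
  exact .step x a l hnr ha hP (by simpa using hout) hl

theorem exists_fate_general {C : Type*} [Fintype C] (R : Set (Rxn C))
    (h3 : Prop3 R) (x : C) :
    ∃ F : Multiset (Set C), Fate R x F := by
  induction x using (wellFounded_strict_reflTransGen (FastLink R)).induction with
  | _ x ih =>
    by_cases hres : IsRestingSet R (scc R x)
    · exact ⟨_, .resting x hres⟩
    obtain ⟨a, P, ha, hP, b, hb, hbx⟩ := exists_exit_of_not_isRestingSet hres
    obtain ⟨F, hF⟩ := exists_fateM fun c hc => ih c (h3.exit_product_descends ha hP hb hbx hc)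
    exact ⟨F, .of_fateM hres ha hP ⟨b, hb, hbx⟩ hF⟩

/-- If C is finite and Property 3 holds, every complex has at least one fate. -/
theorem exists_fate {C : Type*} [Fintype C] (R : Set (Rxn C))
    (hRfin : R.Finite) (hne : NonemptyRxns R) (h3 : Prop3 R) (x : C) :
    ∃ F : Multiset (Set C), Fate R x F :=
  exists_fate_general R h3 x
end

section
/- Assume Property 3. Resting sets are closed under fast transitions: if Q is a resting set, x ∈ Q, and there is a fast transition from the singleton multiset {x} to a multiset B, then B is a singleton multiset {y} with y ∈ Q. -/
variable {C : Type*}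

/-!
A fast reaction `{z} → P` leaving a resting set `Q` has all its products in `Q`, and since `Q` is
strongly connected in `Γ`, any product reaches `z` back along (1,1) reactions. The reaction thus
lies on a cycle of fast reactions, and Property 3 forces `P` to be a singleton. So every step of
a fast transition from `{x}` replaces the single complex by a single complex of `Q`.
-/

lemma Prop3.card_eq_one_of_cycle {R : Set (Rxn C)} (h3 : Prop3 R) {n : ℕ} (hn : 0 < n)
    (c : Fin n → C) (r : Fin n → Multiset C) (hr : ∀ i, ((({c i} : Multiset C), r i) : Rxn C) ∈ R)
    (hnext : ∀ i : Fin n, c ⟨(i.1 + 1) % n, Nat.mod_lt _ hn⟩ ∈ r i) (i : Fin n) :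
    (r i).card = 1 :=
  h3 n hn (fun i => ({c i}, r i)) (fun i => ⟨hr i, Multiset.card_singleton _⟩)
    (fun i _ ha => (Multiset.mem_singleton.mp ha) ▸ hnext i) i

lemma Prop3.card_eq_one_of_reach {R : Set (Rxn C)} (h3 : Prop3 R) {y p : C} {P : Multiset C}
    (hr : ((({y} : Multiset C), P) : Rxn C) ∈ R) (hp : p ∈ P) (hreach : Reach R p y) :
    P.card = 1 := by
  obtain ⟨l, hchain, hlast⟩ := List.exists_isChain_cons_of_relationReflTransGen hreach
  have hn : 0 < (p :: l).length := List.length_pos_iff.mpr (List.cons_ne_nil _ _)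
  have hlast_getElem : ∀ i (hi : i < (p :: l).length), ¬ i + 1 < (p :: l).length → (p :: l)[i] = y := by
    intro i hi hlt
    rw [← hlast, List.getLast_eq_getElem]
    congr 1
    omega
  -- The cycle runs along the path from `p` to `y`, then back to `p` through `{y} → P`.
  let r : Fin (p :: l).length → Multiset C := fun i =>
    if h : i.1 + 1 < (p :: l).length then {(p :: l)[i.1 + 1]} else P
  have hcycle := h3.card_eq_one_of_cycle hn (fun i => (p :: l)[i.1]) r
    (fun i => by
      by_cases h : i.1 + 1 < (p :: l).length
      · simp only [r, dif_pos h]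
        exact List.isChain_iff_getElem.mp hchain i h
      · simp only [r, dif_neg h, hlast_getElem i i.2 h]
        exact hr)
    (fun i => by
      by_cases h : i.1 + 1 < (p :: l).length
      · simp only [r, dif_pos h, Nat.mod_eq_of_lt h, Multiset.mem_singleton]
      · simp only [r, dif_neg h, show i.1 + 1 = (p :: l).length by omega, Nat.mod_self]
        exact hp)
    ⟨(p :: l).length - 1, by omega⟩
  simpa [r, show ¬ (p :: l).length - 1 + 1 < (p :: l).length by omega] using hcycle

namespace IsRestingSet

variable {R : Set (Rxn C)} {Q : Set C}

lemma reach_of_mem (hQ : IsRestingSet R Q) {a b : C} (ha : a ∈ Q) (hb : b ∈ Q) :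
    Reach R a b := by
  obtain ⟨⟨x, rfl⟩, -⟩ := hQ
  exact ha.2.trans hb.1

lemma exists_eq_singleton_of_fastStep (hQ : IsRestingSet R Q) (hne : NonemptyRxns R)
    (h3 : Prop3 R) {z : C} (hz : z ∈ Q) {N : Multiset C} (hstep : FastStep R {z} N) :
    ∃ y ∈ Q, N = {y} := by
  obtain ⟨w, P, M', hwR, hzw, rfl⟩ := hstep
  obtain ⟨rfl, rfl⟩ := (Multiset.singleton_eq_cons_iff _).mp hzw
  have hPQ : ∀ b ∈ P, b ∈ Q := hQ.2 _ hwR (Multiset.card_singleton _) (by simpa using hz)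
  obtain ⟨p, hp⟩ := Multiset.exists_mem_of_ne_zero (hne _ hwR).2
  obtain ⟨q, rfl⟩ := Multiset.card_eq_one.mp
    (h3.card_eq_one_of_reach hwR hp (hQ.reach_of_mem (hPQ p hp) hz))
  exact ⟨q, hPQ q (Multiset.mem_singleton_self q), add_zero _⟩

end IsRestingSet

theorem restingSet_closed_under_fast_transitions_general {C : Type*}
    (R : Set (Rxn C)) (hne : NonemptyRxns R) (h3 : Prop3 R)
    (Q : Set C) (hQ : IsRestingSet R Q) (x : C) (hx : x ∈ Q)
    (B : Multiset C) (hT : FastTransition R ({x} : Multiset C) B) :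
    ∃ y ∈ Q, B = ({y} : Multiset C) := by
  induction hT with
  | refl => exact ⟨x, hx, rfl⟩
  | tail _ hstep ih =>
    obtain ⟨y, hy, rfl⟩ := ih
    exact hQ.exists_eq_singleton_of_fastStep hne h3 hy hstep

/-- Assuming Property 3, resting sets are closed under fast transitions: a fast
transition starting from a single complex in a resting set Q ends in a single
complex of Q. -/
theorem restingSet_closed_under_fast_transitions {C : Type*} [Fintype C]
    (R : Set (Rxn C)) (hRfin : R.Finite) (hne : NonemptyRxns R) (h3 : Prop3 R)
    (Q : Set C) (hQ : IsRestingSet R Q) (x : C) (hx : x ∈ Q)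
    (B : Multiset C) (hT : FastTransition R ({x} : Multiset C) B) :
    ∃ y ∈ Q, B = ({y} : Multiset C) :=
  restingSet_closed_under_fast_transitions_general R hne h3 Q hQ x hx B hT
end

section
/- Let L ≥ 1 and let Q be an L × L real matrix with nonnegative entries such that every row sum of Q is at most 1, at least one row sum of Q is strictly less than 1, and the directed graph on {1, …, L} with an edge i → j whenever Q_{ij} > 0 is strongly connected. Then I_L − Q is invertible, Q^k tends to the zero matrix as k → ∞, and the series Σ_{k=0}^∞ Q^k converges to (I_L − Q)^{-1} (the fundamental matrix). -/
/-!
Row `i` of `Q ^ k` sums to the probability that the chain started at `i` is still inside the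
component after `k` steps. These sums decrease in `k`, and a deficit at a state spreads to every
state that can reach it, one step per edge. By strong connectivity every row sum of some power
`Q ^ N` is then `< 1`, i.e. `‖Q ^ N‖ < 1` in the `ℓ∞` operator norm, while `‖Q‖ ≤ 1`; hence
`Q ^ k → 0`. A vector fixed by `Q` is fixed by every `Q ^ k`, so it vanishes and `1 - Q` is
invertible, and the partial sums `(1 - Q ^ (m + 1)) * (1 - Q)⁻¹` tend to `(1 - Q)⁻¹`.
-/

open Filter Topology Finset

theorem tendsto_pow_atTop_nhds_zero_of_norm_le_one_of_norm_pow_lt_one {R : Type*}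
    [SeminormedRing R] {a : R} (ha : ‖a‖ ≤ 1) {N : ℕ} (hN : N ≠ 0) (haN : ‖a ^ N‖ < 1) :
    Tendsto (a ^ ·) atTop (𝓝 0) := by
  rw [tendsto_zero_iff_norm_tendsto_zero]
  have hanti : Antitone fun k ↦ ‖a ^ k‖ := antitone_nat_of_succ_le fun k ↦ by
    rw [pow_succ]
    exact (norm_mul_le _ _).trans (mul_le_of_le_one_right (norm_nonneg _) ha)
  rw [tendsto_iff_tendsto_subseq_of_antitone hanti
    (tendsto_id.const_mul_atTop' (Nat.pos_of_ne_zero hN))]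
  simpa [Function.comp_def, pow_mul] using (tendsto_pow_atTop_nhds_zero_of_norm_lt_one haN).norm

theorem tendsto_geom_sum_of_tendsto_pow {R : Type*} [Ring R] [TopologicalSpace R]
    [IsTopologicalRing R] {a b : R} (hab : (1 - a) * b = 1)
    (ha : Tendsto (a ^ ·) atTop (𝓝 0)) :
    Tendsto (fun m ↦ ∑ k ∈ range m, a ^ k) atTop (𝓝 b) := by
  have hsum : ∀ m, ∑ k ∈ range m, a ^ k = (1 - a ^ m) * b := fun m ↦ by
    rw [← geom_sum_mul_neg, mul_assoc, hab, mul_one]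
  simpa only [hsum, sub_zero, one_mul] using
    ((tendsto_const_nhds (x := (1 : R))).sub ha).mul_const b

namespace Matrix

variable {ι : Type*} [Fintype ι] [DecidableEq ι]

theorem isUnit_one_sub_of_tendsto_pow {K : Type*} [Field K] [TopologicalSpace K]
    [IsTopologicalRing K] [T2Space K] {Q : Matrix ι ι K}
    (hQ : Tendsto (Q ^ ·) atTop (𝓝 0)) : IsUnit (1 - Q) := by
  rw [isUnit_iff_isUnit_det, isUnit_iff_ne_zero]
  intro hdet
  obtain ⟨v, hv, hQv⟩ := exists_mulVec_eq_zero_iff.mpr hdet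
  have hfix : Q *ᵥ v = v := by
    rw [sub_mulVec, one_mulVec, sub_eq_zero] at hQv
    exact hQv.symm
  have hpow_fix : ∀ k, (Q ^ k) *ᵥ v = v := by
    intro k
    induction k with
    | zero => exact one_mulVec v
    | succ k ih => rw [pow_succ, ← mulVec_mulVec, hfix, ih]
  have hlim : Tendsto (fun k ↦ (Q ^ k) *ᵥ v) atTop (𝓝 (0 *ᵥ v)) :=
    ((continuous_id.matrix_mulVec continuous_const).tendsto 0).comp hQ
  simp only [hpow_fix, zero_mulVec] at hlim
  exact hv (tendsto_const_nhds_iff.mp hlim)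

variable {Q : Matrix ι ι ℝ}

theorem sum_pow_succ_apply_le (hQ : ∀ i j, 0 ≤ Q i j) (hrow : ∀ i, ∑ j, Q i j ≤ 1)
    (k : ℕ) (i : ι) : ∑ j, (Q ^ (k + 1)) i j ≤ ∑ j, (Q ^ k) i j := by
  simp only [pow_succ, mul_apply]
  rw [sum_comm]
  simp only [← mul_sum]
  exact sum_le_sum fun l _ ↦ mul_le_of_le_one_right (pow_apply_nonneg hQ k i l) (hrow l)

theorem antitone_sum_pow_apply (hQ : ∀ i j, 0 ≤ Q i j) (hrow : ∀ i, ∑ j, Q i j ≤ 1)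
    (i : ι) : Antitone fun k ↦ ∑ j, (Q ^ k) i j :=
  antitone_nat_of_succ_le fun k ↦ sum_pow_succ_apply_le hQ hrow k i

theorem sum_pow_apply_le_one (hQ : ∀ i j, 0 ≤ Q i j) (hrow : ∀ i, ∑ j, Q i j ≤ 1)
    (k : ℕ) (i : ι) : ∑ j, (Q ^ k) i j ≤ 1 := by
  simpa [one_apply] using antitone_sum_pow_apply hQ hrow i (Nat.zero_le k)

theorem sum_pow_succ_apply_lt_one (hQ : ∀ i j, 0 ≤ Q i j) (hrow : ∀ i, ∑ j, Q i j ≤ 1)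
    {k : ℕ} {i b : ι} (hib : 0 < Q i b) (hb : ∑ j, (Q ^ k) b j < 1) :
    ∑ j, (Q ^ (k + 1)) i j < 1 := by
  simp only [pow_succ', mul_apply]
  rw [sum_comm]
  simp only [← mul_sum]
  calc ∑ l, Q i l * ∑ j, (Q ^ k) l j
      < ∑ l, Q i l := sum_lt_sum
        (fun l _ ↦ mul_le_of_le_one_right (hQ i l) (sum_pow_apply_le_one hQ hrow k l))
        ⟨b, mem_univ b, mul_lt_of_lt_one_right hib hb⟩
    _ ≤ 1 := hrow i

theorem exists_sum_pow_apply_lt_one_of_reflTransGen (hQ : ∀ i j, 0 ≤ Q i j)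
    (hrow : ∀ i, ∑ j, Q i j ≤ 1) {i j : ι}
    (hij : Relation.ReflTransGen (fun a b ↦ 0 < Q a b) i j) (hj : ∑ l, Q j l < 1) :
    ∃ k, ∑ l, (Q ^ k) i l < 1 := by
  induction hij using Relation.ReflTransGen.head_induction_on with
  | refl => exact ⟨1, by simpa using hj⟩
  | head hab _ ih =>
    obtain ⟨k, hk⟩ := ih
    exact ⟨k + 1, sum_pow_succ_apply_lt_one hQ hrow hab hk⟩

theorem exists_forall_sum_pow_apply_lt_one (hQ : ∀ i j, 0 ≤ Q i j)
    (hrow : ∀ i, ∑ j, Q i j ≤ 1)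
    (hreach : ∀ i, ∃ j, Relation.ReflTransGen (fun a b ↦ 0 < Q a b) i j ∧ ∑ l, Q j l < 1) :
    ∃ N ≠ 0, ∀ i, ∑ j, (Q ^ N) i j < 1 := by
  choose k hk using fun i ↦
    let ⟨_, hij, hj⟩ := hreach i
    exists_sum_pow_apply_lt_one_of_reflTransGen hQ hrow hij hj
  refine ⟨univ.sup k + 1, Nat.succ_ne_zero _, fun i ↦ ?_⟩
  exact (antitone_sum_pow_apply hQ hrow i
    ((le_sup (mem_univ i)).trans (Nat.le_succ _))).trans_lt (hk i)

section linftyOpNorm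

attribute [local instance] Matrix.linftyOpNormedRing

theorem linfty_opNorm_le_one_of_nonneg {A : Matrix ι ι ℝ} (hA : ∀ i j, 0 ≤ A i j)
    (hrow : ∀ i, ∑ j, A i j ≤ 1) : ‖A‖ ≤ 1 := by
  rw [linfty_opNorm_def, NNReal.coe_le_one, Finset.sup_le_iff]
  intro i _
  rw [← NNReal.coe_le_one]
  simpa [Real.norm_of_nonneg (hA i _)] using hrow i

theorem linfty_opNorm_lt_one_of_nonneg {A : Matrix ι ι ℝ} (hA : ∀ i j, 0 ≤ A i j)
    (hrow : ∀ i, ∑ j, A i j < 1) : ‖A‖ < 1 := by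
  rw [linfty_opNorm_def, NNReal.coe_lt_one, Finset.sup_lt_iff zero_lt_one]
  intro i _
  rw [← NNReal.coe_lt_one]
  simpa [Real.norm_of_nonneg (hA i _)] using hrow i

theorem tendsto_pow_atTop_nhds_zero_of_reach_row_sum_lt_one (hQ : ∀ i j, 0 ≤ Q i j)
    (hrow : ∀ i, ∑ j, Q i j ≤ 1)
    (hreach : ∀ i, ∃ j, Relation.ReflTransGen (fun a b ↦ 0 < Q a b) i j ∧ ∑ l, Q j l < 1) :
    Tendsto (Q ^ ·) atTop (𝓝 0) := by
  obtain ⟨N, hN, hQN⟩ := exists_forall_sum_pow_apply_lt_one hQ hrow hreach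
  exact tendsto_pow_atTop_nhds_zero_of_norm_le_one_of_norm_pow_lt_one
    (linfty_opNorm_le_one_of_nonneg hQ hrow) hN
    (linfty_opNorm_lt_one_of_nonneg (pow_apply_nonneg hQ N) hQN)

end linftyOpNorm

end Matrix

theorem fundamental_matrix_general (L : ℕ) (Q : Matrix (Fin L) (Fin L) ℝ)
    (hnn : ∀ i j, 0 ≤ Q i j)
    (hrow : ∀ i, ∑ j, Q i j ≤ 1)
    (hlt : ∃ i, ∑ j, Q i j < 1)
    (hsc : ∀ i j : Fin L, Relation.ReflTransGen (fun a b => 0 < Q a b) i j) :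
    IsUnit (1 - Q) ∧
    Tendsto (fun k : ℕ => Q ^ k) atTop (nhds 0) ∧
    Tendsto (fun m : ℕ => ∑ k ∈ Finset.range (m + 1), Q ^ k) atTop
      (nhds (1 - Q)⁻¹) := by
  obtain ⟨j, hj⟩ := hlt
  have hpow : Tendsto (Q ^ ·) atTop (𝓝 0) :=
    Matrix.tendsto_pow_atTop_nhds_zero_of_reach_row_sum_lt_one hnn hrow
      fun i ↦ ⟨j, hsc i j, hj⟩
  have hunit : IsUnit (1 - Q) := Matrix.isUnit_one_sub_of_tendsto_pow hpow
  have hinv : (1 - Q) * (1 - Q)⁻¹ = 1 :=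
    Matrix.mul_nonsing_inv _ ((Matrix.isUnit_iff_isUnit_det _).mp hunit)
  exact ⟨hunit, hpow,
    (tendsto_geom_sum_of_tendsto_pow hinv hpow).comp (tendsto_add_atTop_nat 1)⟩

/-- For a substochastic, irreducible L × L matrix Q with some row sum strictly less
than 1: I − Q is invertible, Qᵏ → 0, and the series Σₖ Qᵏ converges to (I − Q)⁻¹. -/
theorem fundamental_matrix (L : ℕ) (hL : 1 ≤ L) (Q : Matrix (Fin L) (Fin L) ℝ)
    (hnn : ∀ i j, 0 ≤ Q i j)
    (hrow : ∀ i, ∑ j, Q i j ≤ 1)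
    (hlt : ∃ i, ∑ j, Q i j < 1)
    (hsc : ∀ i j : Fin L, Relation.ReflTransGen (fun a b => 0 < Q a b) i j) :
    IsUnit (1 - Q) ∧
    Tendsto (fun k : ℕ => Q ^ k) atTop (nhds 0) ∧
    Tendsto (fun m : ℕ => ∑ k ∈ Finset.range (m + 1), Q ^ k) atTop
      (nhds (1 - Q)⁻¹) :=
  fundamental_matrix_general L Q hnn hrow hlt hsc
end
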